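/- arXiv:1208.5371 — 2 statements merged into one kernel-verified Lean document; each statement's English description precedes it below -/
import Mathlib

section
/- Let 𝔉 be a union-closed family of subsets of X = {a₁,…,aₙ}, let φ_w be its rising function with respect to w = a₁a₂…aₙ, and let ℱ = φ_w(𝔉). Then for each f ∈ 𝔉, φ_w restricts to a bijection from the principal ideal 𝔉[f] = {g ∈ 𝔉 : f ⊆ g} onto ℱ[f] = {η ∈ ℱ : f ⊆ η}. -/
open Finset

variable {α : Type*} [DecidableEq α]

/-- A family is union-closed if it is closed under pairwise unions. -/
def UnionClosed (F : Finset (Finset α)) : Prop := ∀ f ∈ F, ∀ g ∈ F, f ∪ g ∈ F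

/-- One rising step: φ_{S,a}(z) = z ∪ {a} if z ∪ {a} ∉ S, and z otherwise. -/
def riseStep (S : Finset (Finset α)) (a : α) (z : Finset α) : Finset α :=
  if insert a z ∈ S then z else insert a z

/-- Iterated rising function along a word (list of letters): at each step the
current family is replaced by its image and the next letter is risen. -/
def riseWord (S : Finset (Finset α)) : List α → Finset α → Finset α
  | [], z => z
  | a :: u, z => riseWord (S.image (riseStep S a)) u (riseStep S a z)

/-- The section of a family along (a prefix of) a word. -/
def riseSections (S : Finset (Finset α)) : List α → Finset (Finset α)
  | [] => S
  | a :: u => riseSections (S.image (riseStep S a)) u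

lemma insert_mem_image (S : Finset (Finset α)) (a : α) {x : Finset α} (hx : x ∈ S) :
    insert a x ∈ S.image (riseStep S a) := by
  by_cases h : insert a x ∈ S
  · have : riseStep S a (insert a x) = insert a x := by
      simp [riseStep, Finset.insert_idem, h]
    exact this ▸ mem_image_of_mem _ h
  · have : riseStep S a x = insert a x := by simp [riseStep, h]
    exact this ▸ mem_image_of_mem _ hx

lemma self_mem_image (S : Finset (Finset α)) (a : α) {x : Finset α} (hx : x ∈ S)
    (h : insert a x ∈ S) : x ∈ S.image (riseStep S a) := by
  have : riseStep S a x = x := by simp [riseStep, h]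
  exact this ▸ mem_image_of_mem _ hx

lemma unionClosed_image {S : Finset (Finset α)} (hS : UnionClosed S) (a : α) :
    UnionClosed (S.image (riseStep S a)) := by
  intro x hx y hy
  obtain ⟨z, hz, rfl⟩ := mem_image.1 hx
  obtain ⟨z', hz', rfl⟩ := mem_image.1 hy
  have hzz' := hS z hz z' hz'
  unfold riseStep
  split_ifs with h1 h2 h2
  · refine self_mem_image S a hzz' ?_
    have := hS _ h1 _ hz'
    rwa [Finset.insert_union] at this
  · rw [Finset.union_insert]
    exact insert_mem_image S a hzz'
  · rw [Finset.insert_union]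
    exact insert_mem_image S a hzz'
  · have : insert a z ∪ insert a z' = insert a (z ∪ z') := by
      simp [Finset.insert_union, Finset.union_insert]
    rw [this]
    exact insert_mem_image S a hzz'

lemma riseStep_injOn (S : Finset (Finset α)) (a : α) :
    Set.InjOn (riseStep S a) ↑S := by
  intro x hx y hy h
  simp only [Finset.mem_coe] at hx hy
  unfold riseStep at h
  split_ifs at h with h1 h2 h2
  · exact h
  · exact absurd (h ▸ hx) h2
  · exact absurd (h.symm ▸ hy) h1
  · have hax : a ∉ x := fun h' => h1 (by rwa [Finset.insert_eq_self.2 h'])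
    have hay : a ∉ y := fun h' => h2 (by rwa [Finset.insert_eq_self.2 h'])
    have := congrArg (fun s => Finset.erase s a) h
    simpa [Finset.erase_insert hax, Finset.erase_insert hay] using this

lemma subset_riseWord (w : List α) :
    ∀ (S : Finset (Finset α)) (z : Finset α), z ⊆ riseWord S w z := by
  induction w with
  | nil => intro S z; exact subset_rfl
  | cons a u ih =>
    intro S z
    have h1 : z ⊆ riseStep S a z := by
      unfold riseStep; split_ifs
      · exact subset_rfl
      · exact Finset.subset_insert _ _
    exact h1.trans (ih _ _)

lemma riseWord_injOn (w : List α) :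
    ∀ S : Finset (Finset α), Set.InjOn (riseWord S w) ↑S := by
  induction w with
  | nil => intro S x _ y _ h; exact h
  | cons a u ih =>
    intro S x hx y hy h
    simp only [Finset.mem_coe] at hx hy
    have hx' : riseStep S a x ∈ S.image (riseStep S a) := mem_image_of_mem _ hx
    have hy' : riseStep S a y ∈ S.image (riseStep S a) := mem_image_of_mem _ hy
    exact riseStep_injOn S a (Finset.mem_coe.2 hx) (Finset.mem_coe.2 hy)
      (ih _ (Finset.mem_coe.2 hx') (Finset.mem_coe.2 hy') h)

lemma key_lemma (f : Finset α) (w : List α) :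
    ∀ (S : Finset (Finset α)) (z : Finset α), UnionClosed S → f ∪ z ∈ S →
      ¬ f ⊆ z → ¬ f ⊆ riseWord S w z := by
  induction w with
  | nil => intro S z _ _ h; exact h
  | cons a u ih =>
    intro S z hS hm hns
    show ¬ f ⊆ riseWord (S.image (riseStep S a)) u (riseStep S a z)
    apply ih _ _ (unionClosed_image hS a)
    · unfold riseStep; split_ifs with h1
      · refine self_mem_image S a hm ?_
        have := hS _ hm _ h1
        have heq : (f ∪ z) ∪ insert a z = insert a (f ∪ z) := by
          rw [Finset.union_insert, Finset.union_assoc, Finset.union_self]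
        rwa [heq] at this
      · rw [Finset.union_insert]
        exact insert_mem_image S a hm
    · unfold riseStep; split_ifs with h1
      · exact hns
      · intro hsub
        apply h1
        obtain ⟨b, hbf, hbz⟩ := Finset.not_subset.1 hns
        have hba : b = a := by
          have := hsub hbf
          rcases Finset.mem_insert.1 this with h | h
          · exact h
          · exact absurd h hbz
        subst hba
        have heq : insert b z = f ∪ z := by
          apply Finset.Subset.antisymm
          · exact Finset.insert_subset (Finset.mem_union_left _ hbf)
              Finset.subset_union_right
          · exact Finset.union_subset hsub (Finset.subset_insert _ _)
        exact heq ▸ hm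

/-- Theorem 3.4: φ_w is a bijection between the principal ideals
𝔉[f] = {g ∈ 𝔉 : f ⊆ g} and ℱ[f] = {η ∈ ℱ : f ⊆ η}, where ℱ = φ_w(𝔉). -/
theorem stmt_2 {α : Type*} [DecidableEq α] [Fintype α]
    (F : Finset (Finset α)) (hF : UnionClosed F)
    (w : List α) (hnd : w.Nodup) (hall : ∀ x : α, x ∈ w)
    (f : Finset α) (hf : f ∈ F) :
    Set.BijOn (riseWord F w)
      {g : Finset α | g ∈ F ∧ f ⊆ g}
      {η : Finset α | η ∈ F.image (riseWord F w) ∧ f ⊆ η} := by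
  refine ⟨?_, ?_, ?_⟩
  · rintro g ⟨hg, hfg⟩
    exact ⟨mem_image_of_mem _ hg, hfg.trans (subset_riseWord w F g)⟩
  · intro x hx y hy h
    exact riseWord_injOn w F (Finset.mem_coe.2 hx.1) (Finset.mem_coe.2 hy.1) h
  · rintro η ⟨hη, hfη⟩
    obtain ⟨g, hg, rfl⟩ := mem_image.1 hη
    refine ⟨g, ⟨hg, ?_⟩, rfl⟩
    by_contra hns
    exact key_lemma f w F g hF (hF f hf g hg) hns hfη
end

section
/- Let 𝔉 be a union-closed family of subsets of a finite set X, let a ∈ X, and let g ∈ 𝔉 with a ∉ g. Then there exists a maximal element η of Fib(g) with a ∉ η if and only if there exists h ∈ 𝔉 with a ∈ h such that h covers g in 𝔉 (i.e. g ⊊ h and there is no f ∈ 𝔉 with g ⊊ f ⊊ h). -/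
/-!
For `g ∈ 𝔉`, a set `η` lies in `Fib(g)` exactly when `g ⊆ η` and every member of `𝔉` inside `η`
is already inside `g`. If `η` is maximal in `Fib(g)` and `a ∉ η`, then `η ∪ {a}` contains a member
`f ∋ a` of `𝔉` not below `g`; a minimal member of `𝔉` strictly between `g` and `f ∪ g` covers `g`
and must contain `a`. Conversely, if `h ∋ a` covers `g`, then `g ∪ (h \ {a})` lies in `Fib(g)`,
since any `f ∈ 𝔉` below it gives `g ⊆ f ∪ g ⊊ h`; a maximal element of `Fib(g)` above it avoiding
`a` is maximal in all of `Fib(g)`, because adding `a` would put `h` inside it.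
-/

open Finset

variable {α : Type*} [DecidableEq α]

/-- The set of minimal elements of a family (under inclusion). -/
def minsF (F : Finset (Finset α)) : Finset (Finset α) :=
  F.filter fun h => ∀ g ∈ F, g ⊆ h → g = h

/-- The operator z ↦ z* = ⋃ { h ∈ F : h ⊆ z }. -/
def starOp (F : Finset (Finset α)) (z : Finset α) : Finset α :=
  (F.filter fun f => f ⊆ z).sup id

/-- The fiber Fib(g) = { h ∈ min(F)↑ : h* = g }. -/
def FibS (F : Finset (Finset α)) (g : Finset α) : Set (Finset α) :=
  {h | (∃ m ∈ minsF F, m ⊆ h) ∧ starOp F h = g}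

variable {F : Finset (Finset α)} {a : α} {f g h η : Finset α}

lemma exists_mem_minsF_subset (hf : f ∈ F) : ∃ m ∈ minsF F, m ⊆ f := by
  obtain ⟨m, hmf, hm, hmin⟩ := F.exists_le_minimal hf
  exact ⟨m, mem_filter.2 ⟨hm, fun k hk hkm => le_antisymm hkm (hmin hk hkm)⟩, hmf⟩

lemma subset_starOp (hf : f ∈ F) (hfh : f ⊆ h) : f ⊆ starOp F h :=
  le_sup (f := id) (mem_filter.2 ⟨hf, hfh⟩)

lemma starOp_subset (H : ∀ f ∈ F, f ⊆ h → f ⊆ g) : starOp F h ⊆ g :=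
  Finset.sup_le fun f hf => H f (mem_filter.1 hf).1 (mem_filter.1 hf).2

lemma mem_FibS_iff (hg : g ∈ F) : h ∈ FibS F g ↔ g ⊆ h ∧ ∀ f ∈ F, f ⊆ h → f ⊆ g := by
  constructor
  · rintro ⟨-, rfl⟩
    exact ⟨starOp_subset fun _ _ hfh => hfh, fun _ hf hfh => subset_starOp hf hfh⟩
  · rintro ⟨hgh, hsub⟩
    obtain ⟨m, hm, hmg⟩ := exists_mem_minsF_subset hg
    exact ⟨⟨m, hm, hmg.trans hgh⟩, (starOp_subset hsub).antisymm (subset_starOp hg hgh)⟩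

lemma exists_covering_subset (hf : f ∈ F) (hgf : g ⊂ f) :
    ∃ h ∈ F, g ⊂ h ∧ h ⊆ f ∧ ∀ k ∈ F, ¬(g ⊂ k ∧ k ⊂ h) := by
  obtain ⟨h, hhf, hh, hmin⟩ := (F.filter (g ⊂ ·)).exists_le_minimal (mem_filter.2 ⟨hf, hgf⟩)
  obtain ⟨hhF, hgh⟩ := mem_filter.1 hh
  exact ⟨h, hhF, hgh, hhf, fun k hk ⟨hgk, hkh⟩ =>
    hkh.not_subset (hmin (mem_filter.2 ⟨hk, hgk⟩) hkh.subset)⟩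

lemma exists_covering_of_insert_notMem_FibS (hF : UnionClosed F) (hg : g ∈ F) (hag : a ∉ g)
    (hη : η ∈ FibS F g) (hins : insert a η ∉ FibS F g) :
    ∃ k ∈ F, a ∈ k ∧ g ⊂ k ∧ ∀ f ∈ F, ¬(g ⊂ f ∧ f ⊂ k) := by
  rw [mem_FibS_iff hg] at hη hins
  obtain ⟨hgη, hηsub⟩ := hη
  obtain ⟨f, hf, hfη, hfg⟩ : ∃ f ∈ F, f ⊆ insert a η ∧ ¬f ⊆ g := by
    simpa using not_and.1 hins (hgη.trans (subset_insert a η))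
  have hnot_below {k : Finset α} (hk : k ∈ F) (hkη : k ⊆ insert a η) (hkg : ¬k ⊆ g) : a ∈ k :=
    by_contra fun hak => hkg (hηsub k hk ((subset_insert_iff_of_notMem hak).1 hkη))
  have hgfg : g ⊂ f ∪ g :=
    (ssubset_iff_of_subset subset_union_right).2 ⟨a, mem_union_left _ (hnot_below hf hfη hfg), hag⟩
  obtain ⟨k, hk, hgk, hkf, hcov⟩ := exists_covering_subset (hF f hf g hg) hgfg
  have hkη : k ⊆ insert a η := hkf.trans (union_subset hfη (hgη.trans (subset_insert a η)))
  exact ⟨k, hk, hnot_below hk hkη hgk.not_subset, hgk, hcov⟩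

lemma union_erase_mem_FibS (hF : UnionClosed F) (hg : g ∈ F) (hag : a ∉ g) (hah : a ∈ h)
    (hgh : g ⊂ h) (hcov : ∀ f ∈ F, ¬(g ⊂ f ∧ f ⊂ h)) : g ∪ h.erase a ∈ FibS F g := by
  refine (mem_FibS_iff hg).2 ⟨subset_union_left, fun f hf hfη => ?_⟩
  have hfg_sub : f ∪ g ⊆ h := union_subset (hfη.trans (union_subset hgh.subset (erase_subset a h)))
    hgh.subset
  have ha : a ∉ f ∪ g := by
    simp only [mem_union, not_or]
    exact ⟨fun haf => by simpa [hag] using hfη haf, hag⟩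
  have hfg_lt : f ∪ g ⊂ h := (ssubset_iff_of_subset hfg_sub).2 ⟨a, hah, ha⟩
  obtain heq | hlt := (subset_union_right : g ⊆ f ∪ g).eq_or_ssubset
  · exact union_eq_right.1 heq.symm
  · exact absurd ⟨hlt, hfg_lt⟩ (hcov _ (hF f hf g hg))

/-- Lemma 4.8: for g ∈ 𝔉 with a ∉ g, there is a maximal element η of Fib(g)
with a ∉ η iff there is h ∈ 𝔉 with a ∈ h covering g. -/
theorem stmt_10 {α : Type*} [DecidableEq α] [Fintype α]
    (F : Finset (Finset α)) (hF : UnionClosed F)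
    (a : α) (g : Finset α) (hg : g ∈ F) (hag : a ∉ g) :
    (∃ η ∈ FibS F g, a ∉ η ∧ ∀ η' ∈ FibS F g, η ⊆ η' → η' = η) ↔
    (∃ h ∈ F, a ∈ h ∧ g ⊂ h ∧ ∀ f ∈ F, ¬(g ⊂ f ∧ f ⊂ h)) := by
  constructor
  · rintro ⟨η, hη, haη, hmax⟩
    refine exists_covering_of_insert_notMem_FibS hF hg hag hη fun hins => ?_
    exact haη (hmax _ hins (subset_insert a η) ▸ mem_insert_self a η)
  · rintro ⟨h, hh, hah, hgh, hcov⟩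
    obtain ⟨η, hη₀η, ⟨hη, haη⟩, hmax⟩ :=
      Finite.exists_le_maximal (p := fun z => z ∈ FibS F g ∧ a ∉ z)
        ⟨union_erase_mem_FibS hF hg hag hah hgh hcov, by simp [hag]⟩
    refine ⟨η, hη, haη, fun η' hη' hηη' => ?_⟩
    have haη' : a ∉ η' := fun haη' => hgh.not_subset <| ((mem_FibS_iff hg).1 hη').2 h hh <|
      (erase_subset_iff_of_mem haη').1 (subset_union_right.trans (hη₀η.trans hηη'))
    exact (hmax ⟨hη', haη'⟩ hηη').antisymm hηη'
end
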